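/- Let PGL(2,q) ≤ G ≤ PΓL(2,q) act on the projective line over GF(q), and let O be a G-orbit on 4-subsets of the projective line. If the cross ratios associated with the 4-sets in O do not generate the full multiplicative group GF(q)*, then no element of O witnesses the 4-et property for G. -/
import Mathlib


open Finset

/-- The projective line over `F`: `F` together with a point at infinity. -/
abbrev ProjLine (F : Type*) := Option F

/-- The Möbius transformation determined by `a b c d` acting on the projective
line (`none` is the point at infinity). -/
def mobius {F : Type*} [Field F] [DecidableEq F] (a b c d : F) :
    ProjLine F → ProjLine F
  | none => if c = 0 then none else some (a / c)
  | some x => if c * x + d = 0 then none else some ((a * x + b) / (c * x + d))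

/-- Formal difference of two points of the projective line, with terms involving
`∞` replaced by `1` (they cancel in the cross ratio). -/
def pdiff {F : Type*} [Field F] : ProjLine F → ProjLine F → F
  | some u, some v => u - v
  | _, _ => 1

/-- The cross ratio of four points of the projective line. -/
def crossRatio {F : Type*} [Field F] (x₁ x₂ x₃ x₄ : ProjLine F) : F :=
  (pdiff x₁ x₃ * pdiff x₂ x₄) / (pdiff x₁ x₄ * pdiff x₂ x₃)

/-- `P` is a partition of a finite type. -/
def IsPartition {Ω : Type*} [Fintype Ω] [DecidableEq Ω]
    (P : Finset (Finset Ω)) : Prop :=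
  (∀ p ∈ P, p.Nonempty) ∧
  (∀ p ∈ P, ∀ q ∈ P, p ≠ q → Disjoint p q) ∧
  (∀ x : Ω, ∃ p ∈ P, x ∈ p)

/-- `S` is a transversal of the partition `P`. -/
def IsTransversal {Ω : Type*} [Fintype Ω] [DecidableEq Ω]
    (S : Finset Ω) (P : Finset (Finset Ω)) : Prop :=
  ∀ p ∈ P, (S ∩ p).card = 1

/-- Let `PGL(2,q) ≤ G ≤ PΓL(2,q)` act on the projective line over `GF(q)`, and let
`O` be the `G`-orbit of a `4`-set `B`. If the cross ratios arising from `O` all lie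
in a proper subgroup `M` of `GF(q)*`, then no member of `O` witnesses `4`-et. -/
theorem crossRatio_subgroup_not_four_et
    {F : Type*} [Field F] [Fintype F] [DecidableEq F]
    (G : Subgroup (Equiv.Perm (ProjLine F)))
    (hlower : ∀ a b c d : F, a * d - b * c ≠ 0 →
      ∃ g ∈ G, ∀ x : ProjLine F, g x = mobius a b c d x)
    (hupper : ∀ g ∈ G, ∃ (a b c d : F) (σ : F ≃+* F), a * d - b * c ≠ 0 ∧
      ∀ x : ProjLine F, g x = mobius a b c d (x.map σ))
    (B : Finset (ProjLine F)) (hB : B.card = 4)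
    (M : Subgroup Fˣ) (hM : M ≠ ⊤)
    (hcr : ∀ x₁ x₂ x₃ x₄ : ProjLine F, [x₁, x₂, x₃, x₄].Nodup →
      (∃ g ∈ G, B.image ⇑g = {x₁, x₂, x₃, x₄}) →
      ∀ u : Fˣ, (u : F) = crossRatio x₁ x₂ x₃ x₄ → u ∈ M) :
    ∀ B' : Finset (ProjLine F), (∃ g ∈ G, B.image ⇑g = B') →
      ¬ (∀ P : Finset (Finset (ProjLine F)), IsPartition P → P.card = 4 →
          ∃ g ∈ G, IsTransversal (B'.image ⇑g) P) := by
  classical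
  rintro B' ⟨g₀, hg₀, rfl⟩ h4
  obtain ⟨u₀, hu₀⟩ : ∃ u : Fˣ, u ∉ M := by
    by_contra h; push_neg at h; exact hM ((Subgroup.eq_top_iff' M).mpr h)
  obtain ⟨Mset, hMset⟩ :
      ∃ s : Finset F, s = univ.filter (fun a => ∃ u : Fˣ, (u : F) = a ∧ u ∈ M) := ⟨_, rfl⟩
  obtain ⟨Cset, hCset⟩ :
      ∃ s : Finset F, s = univ.filter (fun a => a ≠ 0 ∧ ∀ u : Fˣ, (u : F) = a → u ∉ M) :=
    ⟨_, rfl⟩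
  obtain ⟨p1, hp1⟩ : ∃ s : Finset (ProjLine F), s = {none} := ⟨_, rfl⟩
  obtain ⟨p2, hp2⟩ : ∃ s : Finset (ProjLine F), s = {some 0} := ⟨_, rfl⟩
  obtain ⟨p3, hp3⟩ : ∃ s : Finset (ProjLine F), s = Mset.image some := ⟨_, rfl⟩
  obtain ⟨p4, hp4⟩ : ∃ s : Finset (ProjLine F), s = Cset.image some := ⟨_, rfl⟩
  obtain ⟨P, hP⟩ : ∃ s : Finset (Finset (ProjLine F)), s = {p1, p2, p3, p4} := ⟨_, rfl⟩
  have hmem3 : ∀ a : F, some a ∈ p3 ↔ ∃ u : Fˣ, (u : F) = a ∧ u ∈ M := by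
    intro a; simp [hp3, hMset]
  have hmem4 : ∀ a : F, some a ∈ p4 ↔ a ≠ 0 ∧ ∀ u : Fˣ, (u : F) = a → u ∉ M := by
    intro a; simp [hp4, hCset]
  have hn3 : (none : ProjLine F) ∉ p3 := by simp [hp3]
  have hn4 : (none : ProjLine F) ∉ p4 := by simp [hp4]
  have h1mem : (some (1 : F)) ∈ p3 := (hmem3 1).mpr ⟨1, rfl, one_mem M⟩
  have hu0mem : (some ((u₀ : F))) ∈ p4 := by
    refine (hmem4 _).mpr ⟨u₀.ne_zero, fun u hu => ?_⟩
    rwa [show u = u₀ from Units.ext hu]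
  have d12 : Disjoint p1 p2 := by simp [hp1, hp2]
  have d13 : Disjoint p1 p3 := by
    rw [Finset.disjoint_left]; intro a ha; rw [hp1, mem_singleton] at ha; subst ha; exact hn3
  have d14 : Disjoint p1 p4 := by
    rw [Finset.disjoint_left]; intro a ha; rw [hp1, mem_singleton] at ha; subst ha; exact hn4
  have d23 : Disjoint p2 p3 := by
    rw [Finset.disjoint_left]; intro a ha; rw [hp2, mem_singleton] at ha; subst ha
    intro h; obtain ⟨u, hu, -⟩ := (hmem3 0).mp h; exact u.ne_zero hu
  have d24 : Disjoint p2 p4 := by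
    rw [Finset.disjoint_left]; intro a ha; rw [hp2, mem_singleton] at ha; subst ha
    intro h; exact ((hmem4 0).mp h).1 rfl
  have d34 : Disjoint p3 p4 := by
    rw [Finset.disjoint_left]; intro a ha hb
    rcases a with _ | x
    · exact hn3 ha
    · obtain ⟨u, hu, huM⟩ := (hmem3 x).mp ha
      exact ((hmem4 x).mp hb).2 u hu huM
  have hnedis : ∀ {p q : Finset (ProjLine F)}, Disjoint p q → p.Nonempty → p ≠ q := by
    intro p q hd hp he; subst he
    exact hp.ne_empty (by simpa using disjoint_self.mp hd)
  have ne12 : p1 ≠ p2 := hnedis d12 ⟨none, by simp [hp1]⟩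
  have ne13 : p1 ≠ p3 := hnedis d13 ⟨none, by simp [hp1]⟩
  have ne14 : p1 ≠ p4 := hnedis d14 ⟨none, by simp [hp1]⟩
  have ne23 : p2 ≠ p3 := hnedis d23 ⟨some 0, by simp [hp2]⟩
  have ne24 : p2 ≠ p4 := hnedis d24 ⟨some 0, by simp [hp2]⟩
  have ne34 : p3 ≠ p4 := hnedis d34 ⟨some 1, h1mem⟩
  have hmemP : ∀ p ∈ P, p = p1 ∨ p = p2 ∨ p = p3 ∨ p = p4 := by
    intro p hp; rw [hP] at hp; simpa using hp
  have hPart : IsPartition P := by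
    refine ⟨?_, ?_, ?_⟩
    · intro p hp
      rcases hmemP p hp with h | h | h | h <;> subst h
      · exact ⟨none, by simp [hp1]⟩
      · exact ⟨some 0, by simp [hp2]⟩
      · exact ⟨some 1, h1mem⟩
      · exact ⟨some (u₀ : F), hu0mem⟩
    · intro p hp q hq hne
      rcases hmemP p hp with h | h | h | h <;> subst h <;>
        rcases hmemP q hq with h | h | h | h <;> subst h <;>
          first
          | exact absurd rfl hne
          | assumption
          | exact d12.symm
          | exact d13.symm
          | exact d14.symm
          | exact d23.symm
          | exact d24.symm
          | exact d34.symm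
    · intro x
      rcases x with _ | a
      · exact ⟨p1, by simp [hP], by simp [hp1]⟩
      · by_cases ha : a = 0
        · subst ha; exact ⟨p2, by simp [hP], by simp [hp2]⟩
        · by_cases haM : Units.mk0 a ha ∈ M
          · exact ⟨p3, by simp [hP], (hmem3 a).mpr ⟨Units.mk0 a ha, rfl, haM⟩⟩
          · refine ⟨p4, by simp [hP], (hmem4 a).mpr ⟨ha, fun u hu => ?_⟩⟩
            rwa [show u = Units.mk0 a ha from Units.ext hu]
  have hPcard : P.card = 4 := by
    rw [hP]
    rw [card_insert_of_notMem (by simp [ne12, ne13, ne14]),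
      card_insert_of_notMem (by simp [ne23, ne24]),
      card_insert_of_notMem (by simp [ne34]), card_singleton]
  obtain ⟨g', hg', hT⟩ := h4 P hPart hPcard
  obtain ⟨S, hSdef⟩ : ∃ s : Finset (ProjLine F), s = (B.image ⇑g₀).image ⇑g' := ⟨_, rfl⟩
  rw [← hSdef] at hT
  have getmem : ∀ p ∈ P, ∃ z ∈ S, z ∈ p := by
    intro p hp
    have hone := hT p hp
    obtain ⟨z, hz⟩ := Finset.card_pos.mp (hone ▸ Nat.one_pos)
    exact ⟨z, (mem_inter.mp hz).1, (mem_inter.mp hz).2⟩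
  have hnoneS : (none : ProjLine F) ∈ S := by
    obtain ⟨z, hzS, hz⟩ := getmem p1 (by simp [hP])
    rw [hp1, mem_singleton] at hz; rwa [hz] at hzS
  have hzeroS : (some (0 : F)) ∈ S := by
    obtain ⟨z, hzS, hz⟩ := getmem p2 (by simp [hP])
    rw [hp2, mem_singleton] at hz; rwa [hz] at hzS
  obtain ⟨zx, hzxS, hzx⟩ := getmem p3 (by simp [hP])
  obtain ⟨zy, hzyS, hzy⟩ := getmem p4 (by simp [hP])
  obtain ⟨x, hx3, rfl⟩ : ∃ x : F, some x ∈ p3 ∧ zx = some x := by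
    rcases zx with _ | x
    · exact absurd hzx hn3
    · exact ⟨x, hzx, rfl⟩
  obtain ⟨y, hy4, rfl⟩ : ∃ y : F, some y ∈ p4 ∧ zy = some y := by
    rcases zy with _ | y
    · exact absurd hzy hn4
    · exact ⟨y, hzy, rfl⟩
  obtain ⟨ux, hux, huxM⟩ := (hmem3 x).mp hx3
  obtain ⟨hy0, hyNM⟩ := (hmem4 y).mp hy4
  have hx0 : x ≠ 0 := hux ▸ ux.ne_zero
  have hxy : x ≠ y := fun h => hyNM ux (h ▸ hux) huxM
  have hquadcard : ({none, some 0, some x, some y} : Finset (ProjLine F)).card = 4 := by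
    rw [card_insert_of_notMem (by simp),
      card_insert_of_notMem (by simp [Ne.symm hx0, Ne.symm hy0]),
      card_insert_of_notMem (by simp [hxy]), card_singleton]
  have hsub : ({none, some 0, some x, some y} : Finset (ProjLine F)) ⊆ S := by
    simp [Finset.insert_subset_iff, hnoneS, hzeroS, hzxS, hzyS]
  have hScard : S.card ≤ 4 := by
    rw [hSdef]
    exact le_trans card_image_le (le_trans card_image_le hB.le)
  have hSeq : ({none, some 0, some x, some y} : Finset (ProjLine F)) = S :=
    Finset.eq_of_subset_of_card_le hsub (by rw [hquadcard]; exact hScard)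
  have hnodup : ([none, some 0, some x, some y] : List (ProjLine F)).Nodup := by
    simp [Ne.symm hx0, Ne.symm hy0, hxy, hx0, hy0]
  have horb : ∃ g ∈ G, B.image ⇑g = ({none, some 0, some x, some y} : Finset (ProjLine F)) := by
    refine ⟨g' * g₀, mul_mem hg' hg₀, ?_⟩
    rw [show ⇑(g' * g₀) = ⇑g' ∘ ⇑g₀ from rfl, ← Finset.image_image, ← hSdef]
    exact hSeq.symm
  have huval : (((Units.mk0 y hy0) * ux⁻¹ : Fˣ) : F) =
      crossRatio (none : ProjLine F) (some 0) (some x) (some y) := by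
    have hcrv : crossRatio (none : ProjLine F) (some 0) (some x) (some y)
        = (0 - y) / (0 - x) := by
      simp [crossRatio, pdiff]
    rw [hcrv, zero_sub, zero_sub, neg_div_neg_eq, div_eq_mul_inv]
    push_cast
    rw [hux]
    simp
  have huM : (Units.mk0 y hy0) * ux⁻¹ ∈ M :=
    hcr none (some 0) (some x) (some y) hnodup horb _ huval
  have huyM : (Units.mk0 y hy0) ∈ M := by
    have h := M.mul_mem huM huxM
    rwa [inv_mul_cancel_right] at h
  exact hyNM (Units.mk0 y hy0) rfl huyM
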